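/- arXiv:1604.07015 — 2 statements merged into one kernel-verified Lean document; each statement's English description precedes it below -/
import Mathlib

section
/- Let (a_k) be a sequence of complex numbers and s_k = ∑_{j=0}^{k} a_j its partial sums. Then for every positive integer n, the weighted average (∑_{k=0}^{n} p_n(k)·s_k)/(∑_{k=0}^{n} p_n(k)) with weights p_n(k) = k·χ_n(k) equals ∑_{k=0}^{n} χ_n(k)·a_k. -/
noncomputable def chi (n k : ℕ) : ℝ := ∏ j ∈ Finset.range k, (1 - (j : ℝ) / n)

lemma chi_succ (n j : ℕ) : chi n (j + 1) = chi n j * (1 - (j : ℝ) / n) := by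
  simp [chi, Finset.prod_range_succ]

lemma chi_tail (n : ℕ) (hn : 1 ≤ n) :
    ∀ d j, j ≤ n → n - j = d →
      ∑ k ∈ Finset.Icc j n, (k : ℝ) * chi n k = n * chi n j := by
  intro d
  induction d with
  | zero =>
    intro j hj hd
    have : j = n := by omega
    subst this
    simp [mul_comm]
  | succ d ih =>
    intro j hj hd
    have hjn : j < n := by omega
    have hins : Finset.Icc j n = insert j (Finset.Icc (j + 1) n) := by
      ext x
      simp only [Finset.mem_Icc, Finset.mem_insert]
      omega
    rw [hins, Finset.sum_insert (by simp), ih (j + 1) (by omega) (by omega), chi_succ]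
    have hn0 : (n : ℝ) ≠ 0 := by positivity
    field_simp
    ring
  
/-- The weighted average of partial sums with weights p_n(k) = k·χ_n(k)
equals the χ-weighted sum of the terms. -/
theorem chi_average_eq_chi_sum (a : ℕ → ℂ) (s : ℕ → ℂ)
    (hs : ∀ k, s k = ∑ j ∈ Finset.range (k + 1), a j)
    (n : ℕ) (hn : 1 ≤ n) :
    (∑ k ∈ Finset.range (n + 1), ((k : ℂ) * (chi n k : ℂ)) * s k) /
      (∑ k ∈ Finset.range (n + 1), ((k : ℂ) * (chi n k : ℂ))) =
    ∑ k ∈ Finset.range (n + 1), (chi n k : ℂ) * a k := by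
  have key : ∀ j, j ≤ n → ∑ k ∈ Finset.Icc j n, (k : ℂ) * (chi n k : ℂ)
      = (n : ℂ) * (chi n j : ℂ) := by
    intro j hj
    have := chi_tail n hn (n - j) j hj rfl
    exact_mod_cast congrArg (Complex.ofReal) this
  have hden : (∑ k ∈ Finset.range (n + 1), ((k : ℂ) * (chi n k : ℂ))) = (n : ℂ) := by
    rw [Finset.range_eq_Ico, show Finset.Ico 0 (n+1) = Finset.Icc 0 n by rfl,
      key 0 (Nat.zero_le n)]
    simp [chi]
  have hnum : (∑ k ∈ Finset.range (n + 1), ((k : ℂ) * (chi n k : ℂ)) * s k)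
      = (n : ℂ) * ∑ k ∈ Finset.range (n + 1), (chi n k : ℂ) * a k := by
    calc (∑ k ∈ Finset.range (n + 1), ((k : ℂ) * (chi n k : ℂ)) * s k)
        = ∑ k ∈ Finset.Ico 0 (n + 1), ∑ j ∈ Finset.Ico 0 (k + 1),
            ((k : ℂ) * (chi n k : ℂ)) * a j := by
          rw [Finset.range_eq_Ico]
          refine Finset.sum_congr rfl fun k _ => ?_
          rw [hs k, Finset.mul_sum, Finset.range_eq_Ico]
      _ = ∑ j ∈ Finset.Ico 0 (n + 1), ∑ k ∈ Finset.Ico j (n + 1),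
            ((k : ℂ) * (chi n k : ℂ)) * a j := by
          rw [Finset.sum_Ico_Ico_comm]
      _ = (n : ℂ) * ∑ k ∈ Finset.range (n + 1), (chi n k : ℂ) * a k := by
          rw [Finset.mul_sum, Finset.range_eq_Ico]
          refine Finset.sum_congr rfl fun j hj => ?_
          have hj' : j ≤ n := by simp at hj; omega
          rw [← Finset.sum_mul, show Finset.Ico j (n+1) = Finset.Icc j n by rfl,
            key j hj']
          ring
  rw [hnum, hden]
  have hn0 : (n : ℂ) ≠ 0 := by
    exact_mod_cast Nat.cast_ne_zero.mpr (by omega : n ≠ 0)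
  field_simp
end

section
/- The Grandi series ∑_{k=0}^{∞} (−1)^k is χ-summable with χ-sum equal to 1/2, i.e., lim_{n→∞} ∑_{k=0}^{n} χ_n(k)·(−1)^k = 1/2. -/
open Finset Filter MeasureTheory Set Real Topology
open scoped Nat

theorem chi_eq_descFactorial_div_pow {n k : ℕ} (hk : k ≤ n) :
    chi n k = n.descFactorial k / (n : ℝ) ^ k := by
  induction k with
  | zero => simp [chi]
  | succ k ih =>
    have hn : (n : ℝ) ≠ 0 := Nat.cast_ne_zero.mpr (by omega)
    rw [chi, prod_range_succ, ← chi, ih (by omega), Nat.descFactorial_succ,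
      Nat.cast_mul, Nat.cast_sub (by omega)]
    field_simp
    ring

theorem integrableOn_exp_neg_mul_pow (k : ℕ) :
    IntegrableOn (fun t => exp (-t) * t ^ k) (Ioi 0) := by
  simpa [← Real.rpow_natCast] using Real.GammaIntegral_convergent (s := k + 1) (by positivity)

theorem integral_exp_neg_mul_pow (k : ℕ) : ∫ t in Ioi 0, exp (-t) * t ^ k = k ! := by
  rw [← Real.Gamma_nat_eq_factorial, Real.Gamma_eq_integral (by positivity)]
  simp [← Real.rpow_natCast]

theorem sum_chi_mul_pow_eq_integral (n : ℕ) (x : ℝ) :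
    ∑ k ∈ range (n + 1), chi n k * x ^ k = ∫ t in Ioi 0, exp (-t) * (1 + x * t / n) ^ n := by
  have hterm : ∀ k ∈ range (n + 1), chi n k * x ^ k
      = ∫ t in Ioi 0, exp (-t) * ((x * t / n) ^ k * n.choose k) := by
    intro k hk
    have hkn : k ≤ n := Nat.lt_succ_iff.mp (mem_range.mp hk)
    calc chi n k * x ^ k = (x / n) ^ k * n.choose k * k ! := by
          rw [chi_eq_descFactorial_div_pow hkn, Nat.descFactorial_eq_factorial_mul_choose]
          push_cast
          ring
      _ = ∫ t in Ioi 0, (x / n) ^ k * n.choose k * (exp (-t) * t ^ k) := by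
          rw [integral_const_mul, integral_exp_neg_mul_pow]
      _ = _ := by
          congr 1 with t
          ring
  rw [sum_congr rfl hterm, ← integral_finsetSum]
  · congr 1 with t
    simp [add_comm (1 : ℝ), add_pow, mul_sum]
  · intro k _
    convert (integrableOn_exp_neg_mul_pow k).const_mul ((x / n) ^ k * n.choose k) using 1
    ext t
    ring

theorem abs_one_sub_le_exp_half {y : ℝ} (hy : 0 ≤ y) : |1 - y| ≤ exp (y / 2) := by
  have hlin := add_one_le_exp (y / 2)
  have hquad := quadratic_le_exp_of_nonneg (by positivity : 0 ≤ y / 2)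
  rw [abs_le]
  constructor <;> nlinarith

theorem abs_exp_neg_mul_one_sub_div_pow_le {n : ℕ} (hn : n ≠ 0) {t : ℝ} (ht : 0 ≤ t) :
    |exp (-t) * (1 - t / n) ^ n| ≤ exp (-(1 / 2) * t) := by
  have hpow : |1 - t / n| ^ n ≤ exp (t / 2) := by
    calc |1 - t / n| ^ n ≤ exp (t / n / 2) ^ n := by
          gcongr
          exact abs_one_sub_le_exp_half (by positivity)
      _ = exp (t / 2) := by
          rw [← exp_nat_mul]
          congr 1
          field_simp
  calc |exp (-t) * (1 - t / n) ^ n| = exp (-t) * |1 - t / n| ^ n := by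
        rw [abs_mul, abs_pow, abs_of_pos (exp_pos _)]
    _ ≤ exp (-t) * exp (t / 2) := by gcongr
    _ = exp (-(1 / 2) * t) := by rw [← exp_add]; ring_nf

theorem tendsto_integral_exp_neg_mul_one_sub_div_pow :
    Tendsto (fun n : ℕ => ∫ t in Ioi 0, exp (-t) * (1 - t / n) ^ n) atTop (𝓝 (1 / 2)) := by
  have hlimit : ∫ t in Ioi 0, exp (-t) * exp (-t) = 1 / 2 := by
    have h := integral_exp_mul_Ioi (a := -2) (by norm_num) 0
    simp only [mul_zero, exp_zero] at h
    rw [show (fun t => exp (-t) * exp (-t)) = fun t => exp (-2 * t) by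
      ext t; rw [← exp_add]; ring_nf, h]
    norm_num
  rw [← hlimit]
  refine tendsto_integral_filter_of_dominated_convergence (fun t => exp (-(1 / 2) * t)) ?_ ?_
    (exp_neg_integrableOn_Ioi 0 (by norm_num)) ?_
  · exact Eventually.of_forall fun n => by fun_prop
  · filter_upwards [eventually_ne_atTop 0] with n hn
    filter_upwards [ae_restrict_mem measurableSet_Ioi] with t ht
    exact abs_exp_neg_mul_one_sub_div_pow_le hn (le_of_lt ht)
  · refine Eventually.of_forall fun t => ?_
    simpa [sub_eq_add_neg, neg_div] using
      (tendsto_one_add_div_pow_exp (-t)).const_mul (exp (-t))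

/-- The Grandi series is χ-summable to 1/2. -/
theorem chi_grandi :
    Filter.Tendsto (fun n : ℕ => ∑ k ∈ Finset.range (n + 1), chi n k * (-1 : ℝ) ^ k)
      Filter.atTop (nhds (1 / 2)) := by
  have hrepr : ∀ n : ℕ, ∑ k ∈ range (n + 1), chi n k * (-1 : ℝ) ^ k
      = ∫ t in Ioi 0, exp (-t) * (1 - t / n) ^ n := fun n => by
    simp [sum_chi_mul_pow_eq_integral, sub_eq_add_neg, neg_div]
  simpa only [hrepr] using tendsto_integral_exp_neg_mul_one_sub_div_pow
end
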